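/- Let (X,d) be a compact metric space, μ = Σ_{j=1}^n α_j δ_{y^j} an atomic probability measure (distinct atoms, positive weights), ν a probability measure on X, ψ ∈ ℝⁿ a dual maximizer with Laguerre cells A_j, tie sets Σ_j, and Σ = ∪_j Σ_j. Then for any optimal coupling π ∈ Γ₀(ν,μ), W₂²(ν,μ) = Σ_{j=1}^n ∫_{A_j \ Σ_j} d²(x, y^j) dν(x) + ∫_{Σ × Y} d²(x,y) dπ(x,y). -/

import Mathlib

/-!
Strong duality is proved directly. Differentiating the dual functional at its maximizer `ψ` in a
direction `v` gives `∑ α_j v_j ≤ ∫ max_{j admissible at x} v_j dν(x)`. Grouping the points `x`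
by their set of admissible indices, this is the dual condition of a finite supply–demand problem,
whose solution splits `ν` into pieces `ρ_j` of mass `α_j` carried by `A_j`. The coupling
`∑ ρ_j ⊗ δ_{y^j}` costs exactly the dual value, so every optimal coupling has zero duality gap,
i.e. lives on `⋃ A_j × {y^j}`. There the cost splits along the sets `A_j \ Σ_j`, where the
target is `y^j`, and `Σ × Y`.
-/

open MeasureTheory

/-- `π` is a coupling of `ν` and `μ`. -/
def IsCoupling {X : Type*} [MeasurableSpace X]
    (π : Measure (X × X)) (ν μ : Measure X) : Prop :=
  π.map Prod.fst = ν ∧ π.map Prod.snd = μ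

/-- `π` is an optimal coupling of `ν` and `μ` for the squared-distance cost. -/
def IsOptimalCoupling {X : Type*} [MetricSpace X] [MeasurableSpace X]
    (π : Measure (X × X)) (ν μ : Measure X) : Prop :=
  IsCoupling π ν μ ∧ ∀ π' : Measure (X × X), IsCoupling π' ν μ →
    (∫ p : X × X, dist p.1 p.2 ^ 2 ∂π) ≤ ∫ p : X × X, dist p.1 p.2 ^ 2 ∂π'

/-- The squared 2-Wasserstein distance, defined as the minimal transport cost
for the squared-distance cost function. -/
noncomputable def W2sq {X : Type*} [MetricSpace X] [MeasurableSpace X]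
    (ν μ : Measure X) : ℝ :=
  sInf {r : ℝ | ∃ π : Measure (X × X), IsCoupling π ν μ ∧
    r = ∫ p : X × X, dist p.1 p.2 ^ 2 ∂π}

/-- The c-transform `ψ^c(x) = min_j ( d²(x, y^j) - ψ^j )`. -/
noncomputable def psiC {X : Type*} [MetricSpace X] {n : ℕ}
    (y : Fin n → X) (ψ : Fin n → ℝ) (x : X) : ℝ :=
  ⨅ j, (dist x (y j) ^ 2 - ψ j)

/-- The Kantorovich dual functional for semi-discrete optimal transport. -/
noncomputable def dualFun {X : Type*} [MetricSpace X] [MeasurableSpace X] {n : ℕ}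
    (y : Fin n → X) (α : Fin n → ℝ) (ν : Measure X) (ψ : Fin n → ℝ) : ℝ :=
  (∫ x, psiC y ψ x ∂ν) + ∑ j, α j * ψ j

/-- The Laguerre cell `A_j`. -/
def Lag {X : Type*} [MetricSpace X] {n : ℕ}
    (y : Fin n → X) (ψ : Fin n → ℝ) (j : Fin n) : Set X :=
  {x | ∀ i, i ≠ j → dist x (y j) ^ 2 - ψ j ≤ dist x (y i) ^ 2 - ψ i}

/-- The tie set `Σ_j = ∪_{i ≠ j} (A_j ∩ A_i)`. -/
def TieSet {X : Type*} [MetricSpace X] {n : ℕ}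
    (y : Fin n → X) (ψ : Fin n → ℝ) (j : Fin n) : Set X :=
  ⋃ i ∈ {i : Fin n | i ≠ j}, (Lag y ψ j ∩ Lag y ψ i)

open Filter Topology
open scoped ENNReal

section LaguerreCells

variable {X : Type*} [MetricSpace X] {n : ℕ} (y : Fin n → X) (ψ : Fin n → ℝ)

lemma psiC_le (x : X) (j : Fin n) : psiC y ψ x ≤ dist x (y j) ^ 2 - ψ j :=
  ciInf_le (Set.finite_range _).bddBelow j

lemma mem_lag_iff {x : X} {j : Fin n} :
    x ∈ Lag y ψ j ↔ dist x (y j) ^ 2 - ψ j ≤ psiC y ψ x := by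
  have : Nonempty (Fin n) := ⟨j⟩
  refine ⟨fun hx => le_ciInf fun i => ?_, fun h i _ => h.trans (psiC_le y ψ x i)⟩
  rcases eq_or_ne i j with rfl | hij
  · exact le_rfl
  · exact hx i hij

lemma psiC_eq_of_mem_lag {x : X} {j : Fin n} (hx : x ∈ Lag y ψ j) :
    psiC y ψ x = dist x (y j) ^ 2 - ψ j :=
  le_antisymm (psiC_le y ψ x j) ((mem_lag_iff y ψ).1 hx)

lemma exists_mem_lag [NeZero n] (x : X) : ∃ j, x ∈ Lag y ψ j := by
  obtain ⟨j, -, hj⟩ := Finset.univ.exists_min_image (fun j => dist x (y j) ^ 2 - ψ j)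
    Finset.univ_nonempty
  exact ⟨j, fun i _ => hj i (Finset.mem_univ i)⟩

lemma abs_psiC_sub_psiC_le [NeZero n] (φ : Fin n → ℝ) (x : X) :
    |psiC y ψ x - psiC y φ x| ≤ ‖ψ - φ‖ := by
  have hcoord : ∀ k, |ψ k - φ k| ≤ ‖ψ - φ‖ := fun k => norm_le_pi_norm (ψ - φ) k
  obtain ⟨i, hi⟩ := exists_mem_lag y ψ x
  obtain ⟨j, hj⟩ := exists_mem_lag y φ x
  have := psiC_le y φ x i
  have := psiC_le y ψ x j
  rw [psiC_eq_of_mem_lag y ψ hi, psiC_eq_of_mem_lag y φ hj] at *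
  rw [abs_le]
  constructor <;> linarith [abs_le.1 (hcoord i), abs_le.1 (hcoord j)]

lemma continuous_psiC [NeZero n] : Continuous (psiC y ψ) := by
  have h : psiC y ψ = fun x => Finset.univ.inf' Finset.univ_nonempty
      fun j => dist x (y j) ^ 2 - ψ j := by
    funext x
    rw [Finset.inf'_univ_eq_ciInf]
    rfl
  rw [h]
  exact Continuous.finset_inf'_apply _ fun j _ => by fun_prop

lemma isClosed_lag (j : Fin n) : IsClosed (Lag y ψ j) := by
  simp only [Lag, Set.ofPred_forall]
  exact isClosed_iInter fun i => isClosed_iInter fun _ => isClosed_le (by fun_prop) (by fun_prop)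

lemma eq_of_mem_lag_diff_tieSet {x : X} {i j : Fin n} (hx : x ∈ Lag y ψ j \ TieSet y ψ j)
    (hi : x ∈ Lag y ψ i) : i = j := by
  by_contra hij
  exact hx.2 (Set.mem_biUnion hij ⟨hx.1, hi⟩)

lemma notMem_iUnion_tieSet {x : X} {j : Fin n} (hx : x ∈ Lag y ψ j \ TieSet y ψ j) :
    x ∉ ⋃ i, TieSet y ψ i := by
  simp only [TieSet, Set.mem_iUnion, Set.mem_ofPred_eq, Set.mem_inter_iff, not_exists]
  intro i k hki hxi
  exact hki ((eq_of_mem_lag_diff_tieSet y ψ hx hxi.2).trans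
    (eq_of_mem_lag_diff_tieSet y ψ hx hxi.1).symm)

open Classical in
noncomputable def admissible (x : X) : Finset (Fin n) := {j | x ∈ Lag y ψ j}

@[simp] lemma mem_admissible {x : X} {j : Fin n} : j ∈ admissible y ψ x ↔ x ∈ Lag y ψ j := by
  simp [admissible]

lemma admissible_nonempty [NeZero n] (x : X) : (admissible y ψ x).Nonempty := by
  obtain ⟨j, hj⟩ := exists_mem_lag y ψ x
  exact ⟨j, (mem_admissible y ψ).2 hj⟩

variable [MeasurableSpace X] [BorelSpace X]

lemma measurableSet_lag (j : Fin n) : MeasurableSet (Lag y ψ j) :=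
  (isClosed_lag y ψ j).measurableSet

lemma measurableSet_tieSet (j : Fin n) : MeasurableSet (TieSet y ψ j) :=
  MeasurableSet.biUnion (Set.to_countable _) fun i _ =>
    (measurableSet_lag y ψ j).inter (measurableSet_lag y ψ i)

lemma measurable_admissible : Measurable (admissible y ψ) :=
  measurable_finset_iff.2 fun j => by
    simp only [mem_admissible]
    exact measurableSet_setOfPred.1 (measurableSet_lag y ψ j)

end LaguerreCells

section Allocation

variable {ι : Type*} [Fintype ι]

/-- `Q S j` is the mass that the points with admissible set `S` send to `j`. -/
def allocations (w : Finset ι → ℝ) : Set (Finset ι → ι → ℝ) :=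
  {Q | (∀ S j, 0 ≤ Q S j) ∧ (∀ S, ∑ j, Q S j = w S) ∧ ∀ S, ∀ j ∉ S, Q S j = 0}

lemma convex_allocations (w : Finset ι → ℝ) : Convex ℝ (allocations w) := by
  rintro P ⟨hP₀, hPw, hPS⟩ Q ⟨hQ₀, hQw, hQS⟩ a b ha hb hab
  refine ⟨fun S j => ?_, fun S => ?_, fun S j hj => ?_⟩
  · have := hP₀ S j
    have := hQ₀ S j
    simp only [Pi.add_apply, Pi.smul_apply, smul_eq_mul]
    positivity
  · simp only [Pi.add_apply, Pi.smul_apply, smul_eq_mul, Finset.sum_add_distrib,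
      ← Finset.mul_sum, hPw, hQw, ← add_mul, hab, one_mul]
  · simp [hPS S j hj, hQS S j hj]

lemma isCompact_allocations (w : Finset ι → ℝ) : IsCompact (allocations w) := by
  have hclosed : IsClosed (allocations w) := by
    simp only [allocations, Set.ofPred_and, Set.ofPred_forall]
    exact (isClosed_iInter fun S => isClosed_iInter fun j =>
        isClosed_le continuous_const (by fun_prop)).inter
      ((isClosed_iInter fun S => isClosed_eq (by fun_prop) continuous_const).inter
      (isClosed_iInter fun S => isClosed_iInter fun j => isClosed_iInter fun _ =>
        isClosed_eq (by fun_prop) continuous_const))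
  refine (isCompact_univ_pi fun S => isCompact_univ_pi fun _ => isCompact_Icc
    (a := 0) (b := w S)).of_isClosed_subset hclosed fun Q ⟨hQ₀, hQw, _⟩ S _ j _ =>
    ⟨hQ₀ S j, ?_⟩
  rw [← hQw S]
  exact Finset.single_le_sum (fun i _ => hQ₀ S i) (Finset.mem_univ j)

/-- The greedy allocation: each `S` sends all of its mass to a maximizer of `v` on `S`. -/
lemma exists_mem_allocations_sum_mul_eq {w : Finset ι → ℝ} (hw : ∀ S, 0 ≤ w S) (hw₀ : w ∅ = 0)
    (v : ι → ℝ) : ∃ Q ∈ allocations w, ∃ m : Finset ι → ℝ, (∀ S, ∀ j ∈ S, v j ≤ m S) ∧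
      ∀ S, ∑ j, Q S j * v j = w S * m S := by
  classical
  have hrow : ∀ S : Finset ι, ∃ q : ι → ℝ, ∃ c : ℝ, (∀ j, 0 ≤ q j) ∧ ∑ j, q j = w S ∧
      (∀ j ∉ S, q j = 0) ∧ (∀ j ∈ S, v j ≤ c) ∧ ∑ j, q j * v j = w S * c := by
    intro S
    rcases S.eq_empty_or_nonempty with rfl | hS
    · exact ⟨0, 0, fun _ => le_rfl, by simp [hw₀], fun _ _ => rfl, by simp, by simp⟩
    obtain ⟨k, hk, hkmax⟩ := S.exists_max_image v hS
    refine ⟨Pi.single k (w S), v k, fun j => ?_, by simp, fun j hj => ?_, hkmax, ?_⟩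
    · rcases eq_or_ne j k with rfl | hjk
      · simpa using hw S
      · simp [hjk]
    · exact Pi.single_eq_of_ne (ne_of_mem_of_not_mem hk hj).symm _
    · simp [Pi.single_apply]
  choose Q m hQ₀ hQw hQS hvm hQm using hrow
  exact ⟨Q, ⟨hQ₀, hQw, hQS⟩, m, hvm, hQm⟩

/-- A finite supply–demand theorem, proved by separating `α` from the image of the compact
convex set of allocations. -/
theorem exists_mem_allocations_sum_eq {w : Finset ι → ℝ} (hw : ∀ S, 0 ≤ w S) {α : ι → ℝ}
    (h : ∀ (v : ι → ℝ) (m : Finset ι → ℝ), (∀ S, ∀ j ∈ S, v j ≤ m S) →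
      ∑ j, α j * v j ≤ ∑ S, w S * m S) :
    ∃ Q ∈ allocations w, ∀ j, ∑ S, Q S j = α j := by
  classical
  have hw₀ : w ∅ = 0 := by
    have := h 0 (fun S => if S = ∅ then -1 else 0) fun S j hj => by
      simp [Finset.ne_empty_of_mem hj]
    simp only [Pi.zero_apply, mul_zero, Finset.sum_const_zero, mul_ite, mul_neg, mul_one,
      Finset.sum_ite_eq', Finset.mem_univ, if_true] at this
    exact le_antisymm (by linarith) (hw ∅)
  let T : (Finset ι → ι → ℝ) →ₗ[ℝ] (ι → ℝ) := ∑ S, LinearMap.proj S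
  have hT : ∀ Q j, T Q j = ∑ S, Q S j := fun Q j => by simp [T]
  suffices hα : α ∈ T '' allocations w by
    obtain ⟨Q, hQ, hTQ⟩ := hα
    exact ⟨Q, hQ, fun j => by rw [← hT, hTQ]⟩
  by_contra hα
  have hK := isCompact_allocations w
  obtain ⟨f, u, hfK, hfα⟩ := geometric_hahn_banach_closed_point
    ((convex_allocations w).linear_image T) (hK.image T.continuous_of_finiteDimensional).isClosed hα
  set v : ι → ℝ := fun j => f fun i => if j = i then 1 else 0
  have hf : ∀ z, f z = ∑ j, z j * v j := fun z => by
    simpa using f.toLinearMap.pi_apply_eq_sum_univ z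
  obtain ⟨Q, hQ, m, hvm, hQm⟩ := exists_mem_allocations_sum_mul_eq hw hw₀ v
  have hfTQ : f (T Q) = ∑ S, w S * m S := by
    simp only [hf, hT, Finset.sum_mul]
    rw [Finset.sum_comm]
    exact Finset.sum_congr rfl fun S _ => hQm S
  have := hfK _ ⟨Q, hQ, rfl⟩
  have := h v m hvm
  rw [hf] at hfα
  linarith

end Allocation

section MeasureSplit

variable {X κ ι : Type*} [MeasurableSpace X] [Fintype κ] [MeasurableSpace κ]
  [MeasurableSingletonClass κ] [Fintype ι]

lemma sum_restrict_preimage_singleton (ν : Measure X) {f : X → κ} (hf : Measurable f) :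
    ∑ k, ν.restrict (f ⁻¹' {k}) = ν := by
  rw [← Measure.sum_fintype, ← Measure.restrict_iUnion (pairwise_disjoint_fiber f)
    fun k => hf (measurableSet_singleton k), ← Set.preimage_iUnion, Set.iUnion_of_singleton,
    Set.preimage_univ, Measure.restrict_univ]

theorem exists_sum_eq_of_sum_eq_measure_preimage (ν : Measure X) [IsFiniteMeasure ν]
    {f : X → κ} (hf : Measurable f) (Q : κ → ι → ℝ≥0∞)
    (hQ : ∀ k, ∑ j, Q k j = ν (f ⁻¹' {k})) :
    ∃ ρ : ι → Measure X, ∑ j, ρ j = ν ∧ ∀ j k, ρ j (f ⁻¹' {k}) = Q k j := by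
  have hfib : ∀ k, MeasurableSet (f ⁻¹' {k}) := fun k => hf (measurableSet_singleton k)
  have hQ₀ : ∀ k j, ν (f ⁻¹' {k}) = 0 → Q k j = 0 := fun k j h0 =>
    le_antisymm ((Finset.single_le_sum (fun i _ => zero_le) (Finset.mem_univ j)).trans
      (hQ k ▸ h0.le)) zero_le
  refine ⟨fun j => ∑ k, (Q k j / ν (f ⁻¹' {k})) • ν.restrict (f ⁻¹' {k}), ?_, fun j k => ?_⟩
  · rw [Finset.sum_comm]
    conv_rhs => rw [← sum_restrict_preimage_singleton ν hf]
    refine Finset.sum_congr rfl fun k _ => ?_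
    rw [← Finset.sum_smul]
    simp_rw [div_eq_mul_inv]
    rw [← Finset.sum_mul, hQ k, ← div_eq_mul_inv]
    rcases eq_or_ne (ν (f ⁻¹' {k})) 0 with h0 | h0
    · rw [Measure.restrict_eq_zero.2 h0, smul_zero]
    · rw [ENNReal.div_self h0 (measure_ne_top _ _), one_smul]
  · simp only [Measure.coe_finsetSum, Finset.sum_apply, Measure.smul_apply, smul_eq_mul,
      Measure.restrict_apply (hfib _)]
    rw [Finset.sum_eq_single k]
    · rw [Set.inter_self]
      rcases eq_or_ne (ν (f ⁻¹' {k})) 0 with h0 | h0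
      · rw [h0, mul_zero, hQ₀ k j h0]
      · exact ENNReal.div_mul_cancel h0 (measure_ne_top _ _)
    · intro k' _ hk'
      rw [(Set.disjoint_singleton.2 hk'.symm).preimage f |>.inter_eq, measure_empty, mul_zero]
    · simp

end MeasureSplit

section FirstOrderCondition

variable {X : Type*} [MetricSpace X] {n : ℕ} [NeZero n] (y : Fin n → X) (ψ : Fin n → ℝ)

/-- For small `t ≥ 0` only the admissible indices compete in the minimum defining
`(ψ + t v)ᶜ`. -/
lemma psiC_add_smul_eventuallyEq (v : Fin n → ℝ) (x : X) :
    ∀ᶠ t in 𝓝[≥] 0, psiC y (ψ + t • v) x =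
      psiC y ψ x - t * (admissible y ψ x).sup' (admissible_nonempty y ψ x) v := by
  set M := (admissible y ψ x).sup' (admissible_nonempty y ψ x) v
  obtain ⟨j₀, hj₀, hM⟩ := Finset.exists_mem_eq_sup' (admissible_nonempty y ψ x) v
  rw [mem_admissible] at hj₀
  have hgap : ∀ᶠ t in 𝓝 0, ∀ j, x ∉ Lag y ψ j →
      psiC y ψ x - t * M < dist x (y j) ^ 2 - (ψ j + t * v j) := by
    refine eventually_all.2 fun j => ?_
    by_cases hj : x ∈ Lag y ψ j
    · exact Eventually.of_forall fun _ h => absurd hj h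
    have h0 : psiC y ψ x < dist x (y j) ^ 2 - ψ j := not_le.1 ((mem_lag_iff y ψ).not.1 hj)
    exact (ContinuousAt.eventually_lt (by fun_prop) (by fun_prop) (by simpa using h0)).mono
      fun t ht _ => ht
  filter_upwards [nhdsWithin_le_nhds hgap, self_mem_nhdsWithin] with t ht (ht₀ : 0 ≤ t)
  refine le_antisymm ?_ (le_ciInf fun j => ?_)
  · calc psiC y (ψ + t • v) x ≤ dist x (y j₀) ^ 2 - (ψ + t • v) j₀ := psiC_le _ _ x j₀
      _ = psiC y ψ x - t * M := by
        rw [psiC_eq_of_mem_lag y ψ hj₀, show M = v j₀ from hM]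
        simp only [Pi.add_apply, Pi.smul_apply, smul_eq_mul]
        ring
  · simp only [Pi.add_apply, Pi.smul_apply, smul_eq_mul]
    by_cases hj : x ∈ Lag y ψ j
    · have hvj : v j ≤ M := Finset.le_sup' v ((mem_admissible y ψ).2 hj)
      rw [psiC_eq_of_mem_lag y ψ hj]
      nlinarith
    · exact (ht j hj).le

variable [CompactSpace X] [MeasurableSpace X] [BorelSpace X]

lemma integrable_psiC (ν : Measure X) [IsFiniteMeasure ν] : Integrable (psiC y ψ) ν :=
  (continuous_psiC y ψ).integrable_of_hasCompactSupport (HasCompactSupport.of_compactSpace _)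

/-- First-order optimality of the dual maximizer `ψ` in the direction `v`. -/
lemma sum_mul_le_integral_sup'_of_dualFun_le {α : Fin n → ℝ} {ν : Measure X} [IsFiniteMeasure ν]
    (hmax : ∀ φ, dualFun y α ν φ ≤ dualFun y α ν ψ) (v : Fin n → ℝ) :
    ∑ j, α j * v j ≤ ∫ x, (admissible y ψ x).sup' (admissible_nonempty y ψ x) v ∂ν := by
  set F : ℝ → X → ℝ := fun t x => (psiC y ψ x - psiC y (ψ + t • v) x) / t
  have hbound : ∀ t > 0, ∀ x, ‖F t x‖ ≤ ‖v‖ := fun t ht x => by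
    have := abs_psiC_sub_psiC_le y ψ (ψ + t • v) x
    rw [sub_add_cancel_left, norm_neg, norm_smul, Real.norm_of_nonneg ht.le] at this
    rw [Real.norm_eq_abs, abs_div, abs_of_pos ht, div_le_iff₀ ht]
    linarith
  have hlim : Tendsto (fun t => ∫ x, F t x ∂ν) (𝓝[>] 0)
      (𝓝 (∫ x, (admissible y ψ x).sup' (admissible_nonempty y ψ x) v ∂ν)) := by
    refine tendsto_integral_filter_of_dominated_convergence (fun _ => ‖v‖)
      (Eventually.of_forall fun t => ?_) (eventually_mem_nhdsWithin.mono fun t ht =>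
        ae_of_all _ (hbound t ht)) (integrable_const _) (ae_of_all _ fun x => ?_)
    · exact (((continuous_psiC y ψ).sub (continuous_psiC y _)).div_const t).aestronglyMeasurable
    · refine tendsto_const_nhds.congr' ?_
      filter_upwards [nhdsWithin_mono _ Set.Ioi_subset_Ici_self
        (psiC_add_smul_eventuallyEq y ψ v x), self_mem_nhdsWithin] with t ht (ht₀ : 0 < t)
      simp only [F]
      rw [ht, sub_sub_cancel, mul_div_cancel_left₀ _ ht₀.ne']
  refine ge_of_tendsto hlim (eventually_mem_nhdsWithin.mono fun t (ht : 0 < t) => ?_)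
  have hdual := hmax (ψ + t • v)
  simp only [dualFun, Pi.add_apply, Pi.smul_apply, smul_eq_mul, mul_add,
    Finset.sum_add_distrib] at hdual
  have hint : ∫ x, F t x ∂ν = ((∫ x, psiC y ψ x ∂ν) - ∫ x, psiC y (ψ + t • v) x ∂ν) / t := by
    rw [integral_div, integral_sub (integrable_psiC y ψ ν) (integrable_psiC y _ ν)]
  rw [hint, le_div_iff₀ ht, Finset.sum_mul]
  have : ∑ j, α j * (t * v j) = ∑ j, α j * v j * t := 
    Finset.sum_congr rfl fun j _ => by ring
  linarith

end FirstOrderCondition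

section OptimalCoupling

variable {X : Type*} [MetricSpace X] [CompactSpace X] [MeasurableSpace X] [BorelSpace X]
  {n : ℕ} [NeZero n] (y : Fin n → X) (ψ : Fin n → ℝ)

lemma sum_mul_le_sum_measureReal_mul_of_dualFun_le {α : Fin n → ℝ} {ν : Measure X}
    [IsFiniteMeasure ν] (hmax : ∀ φ, dualFun y α ν φ ≤ dualFun y α ν ψ) (v : Fin n → ℝ)
    (m : Finset (Fin n) → ℝ) (hvm : ∀ S, ∀ j ∈ S, v j ≤ m S) :
    ∑ j, α j * v j ≤ ∑ S, (ν.map (admissible y ψ)).real {S} * m S := by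
  have hadm := measurable_admissible y ψ
  have hint : ∀ g : Finset (Fin n) → ℝ, Integrable (g ∘ admissible y ψ) ν := fun g =>
    (Integrable.of_finite (μ := ν.map (admissible y ψ))).comp_measurable hadm
  -- `sup'` needs a nonemptiness proof; factor it through a total function of the admissible set
  have hsup : (fun x => (admissible y ψ x).sup' (admissible_nonempty y ψ x) v) =
      (fun S => if h : S.Nonempty then S.sup' h v else 0) ∘ admissible y ψ :=
    funext fun x => by simp [admissible_nonempty y ψ x]
  calc ∑ j, α j * v j ≤ ∫ x, (admissible y ψ x).sup' (admissible_nonempty y ψ x) v ∂ν :=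
        sum_mul_le_integral_sup'_of_dualFun_le y ψ hmax v
    _ ≤ ∫ x, m (admissible y ψ x) ∂ν :=
        integral_mono (hsup ▸ hint _) (hint m) fun x => Finset.sup'_le _ _ fun j hj => hvm _ j hj
    _ = ∑ S, (ν.map (admissible y ψ)).real {S} * m S := by
        rw [← integral_map hadm.aemeasurable Integrable.of_finite.1,
          integral_fintype Integrable.of_finite]
        rfl

lemma exists_sum_eq_ae_mem_lag_of_dualFun_le {α : Fin n → ℝ} {ν : Measure X}
    [IsFiniteMeasure ν] (hmax : ∀ φ, dualFun y α ν φ ≤ dualFun y α ν ψ) :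
    ∃ ρ : Fin n → Measure X, ∑ j, ρ j = ν ∧ (∀ j, ρ j Set.univ = ENNReal.ofReal (α j)) ∧
      ∀ j, ∀ᵐ x ∂ρ j, x ∈ Lag y ψ j := by
  have hadm := measurable_admissible y ψ
  have hfib : ∀ S, MeasurableSet (admissible y ψ ⁻¹' {S}) := fun S =>
    hadm (measurableSet_singleton S)
  obtain ⟨Q, ⟨hQ₀, hQw, hQS⟩, hQα⟩ := exists_mem_allocations_sum_eq (fun S => measureReal_nonneg)
    (sum_mul_le_sum_measureReal_mul_of_dualFun_le y ψ hmax)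
  obtain ⟨ρ, hρν, hρQ⟩ := exists_sum_eq_of_sum_eq_measure_preimage ν hadm
    (fun S j => ENNReal.ofReal (Q S j)) fun S => by
      rw [← ENNReal.ofReal_sum_of_nonneg fun j _ => hQ₀ S j, hQw,
        ← Measure.map_apply hadm (measurableSet_singleton S)]
      exact ENNReal.ofReal_toReal (measure_ne_top _ _)
  refine ⟨ρ, hρν, fun j => ?_, fun j => ?_⟩
  · rw [← hQα j, ENNReal.ofReal_sum_of_nonneg fun S _ => hQ₀ S j]
    simp_rw [← hρQ]
    rw [sum_measure_preimage_singleton _ fun S _ => hfib S, Finset.coe_univ, Set.preimage_univ]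
  · have hcompl : {x | x ∉ Lag y ψ j} =
        admissible y ψ ⁻¹' ↑({S | j ∉ S} : Finset (Finset (Fin n))) := by
      ext x
      simp
    rw [ae_iff, hcompl, ← sum_measure_preimage_singleton _ fun S _ => hfib S]
    refine Finset.sum_eq_zero fun S hS => ?_
    rw [hρQ, hQS S j (by simpa using hS), ENNReal.ofReal_zero]

theorem exists_isCoupling_ae_mem_lag {α : Fin n → ℝ} {ν : Measure X} [IsFiniteMeasure ν]
    (hmax : ∀ φ, dualFun y α ν φ ≤ dualFun y α ν ψ) {μ : Measure X}
    (hμ : μ = ∑ j, ENNReal.ofReal (α j) • Measure.dirac (y j)) :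
    ∃ π₀ : Measure (X × X), IsCoupling π₀ ν μ ∧ ∀ᵐ p ∂π₀, ∃ j, p.1 ∈ Lag y ψ j ∧ p.2 = y j := by
  obtain ⟨ρ, hρν, hρ_univ, hρ_lag⟩ := exists_sum_eq_ae_mem_lag_of_dualFun_le y ψ hmax
  have hemb : ∀ j, Measurable fun x : X => (x, y j) := fun j =>
    measurable_id.prodMk measurable_const
  refine ⟨∑ j, (ρ j).map fun x => (x, y j), ⟨?_, ?_⟩, ?_⟩
  · rw [Measure.map_finset_sum' measurable_fst.aemeasurable, ← hρν]
    refine Finset.sum_congr rfl fun j _ => ?_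
    rw [Measure.map_map measurable_fst (hemb j)]
    exact Measure.map_id
  · rw [Measure.map_finset_sum' measurable_snd.aemeasurable, hμ]
    refine Finset.sum_congr rfl fun j _ => ?_
    rw [Measure.map_map measurable_snd (hemb j), ← hρ_univ j]
    exact Measure.map_const _ _
  · rw [← Measure.sum_fintype, Measure.ae_sum_iff]
    intro j
    have hmem := (ae_map_iff (hemb j).aemeasurable ((measurableSet_lag y ψ j).prod
      (measurableSet_singleton (y j)))).2 ((hρ_lag j).mono fun x hx => ⟨hx, rfl⟩)
    exact hmem.mono fun p hp => ⟨j, hp.1, hp.2⟩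

end OptimalCoupling

section Couplings

variable {X : Type*} [MeasurableSpace X] {π : Measure (X × X)} {ν μ : Measure X}

lemma IsCoupling.isFiniteMeasure [IsFiniteMeasure ν] (h : IsCoupling π ν μ) :
    IsFiniteMeasure π :=
  ⟨by rw [← Set.preimage_univ (f := Prod.fst), ← Measure.map_apply measurable_fst
    MeasurableSet.univ, h.1]; exact measure_lt_top ν _⟩

lemma W2sq_eq_integral_of_isOptimalCoupling [MetricSpace X] (h : IsOptimalCoupling π ν μ) :
    W2sq ν μ = ∫ p, dist p.1 p.2 ^ 2 ∂π :=
  IsLeast.csInf_eq ⟨⟨π, h.1, rfl⟩, by rintro _ ⟨π', hπ', rfl⟩; exact h.2 π' hπ'⟩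

end Couplings

section PotentialOnAtoms

variable {X : Type*} {n : ℕ} (y : Fin n → X) (ψ : Fin n → ℝ)

noncomputable def psiExt (z : X) : ℝ := ∑ j, ({y j} : Set X).indicator (fun _ => ψ j) z

lemma psiExt_apply (hy : Function.Injective y) (i : Fin n) : psiExt y ψ (y i) = ψ i := by
  rw [psiExt, Finset.sum_eq_single i]
  · simp
  · exact fun j _ hji => Set.indicator_of_notMem (s := {y j})
      (fun h => hji (hy (Set.mem_singleton_iff.1 h)).symm) _
  · simp

variable [MeasurableSpace X] [MeasurableSingletonClass X]

lemma integrable_psiExt (m : Measure X) [IsFiniteMeasure m] : Integrable (psiExt y ψ) m :=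
  integrable_finsetSum _ fun _ _ => (integrable_const _).indicator (measurableSet_singleton _)

lemma integrable_psiExt_snd (π : Measure (X × X)) [IsFiniteMeasure π] :
    Integrable (fun p => psiExt y ψ p.2) π :=
  (integrable_psiExt y ψ (π.map Prod.snd)).comp_measurable measurable_snd

variable {α : Fin n → ℝ} {μ : Measure X}

lemma integral_psiExt (hy : Function.Injective y) (hα : ∀ j, 0 ≤ α j)
    (hμ : μ = ∑ j, ENNReal.ofReal (α j) • Measure.dirac (y j)) :
    ∫ z, psiExt y ψ z ∂μ = ∑ j, α j * ψ j := by
  rw [hμ, integral_finsetSum_measure fun j _ =>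
    (integrable_psiExt y ψ _).smul_measure ENNReal.ofReal_ne_top]
  refine Finset.sum_congr rfl fun j _ => ?_
  rw [integral_smul_measure, integral_dirac, psiExt_apply y ψ hy, ENNReal.toReal_ofReal (hα j),
    smul_eq_mul]

lemma ae_snd_mem_range_of_isCoupling {π : Measure (X × X)} {ν : Measure X}
    (hμ : μ = ∑ j, ENNReal.ofReal (α j) • Measure.dirac (y j)) (hc : IsCoupling π ν μ) :
    ∀ᵐ p ∂π, p.2 ∈ Set.range y := by
  refine ae_of_ae_map measurable_snd.aemeasurable ?_
  rw [hc.2, hμ, ← Measure.sum_fintype, Measure.ae_sum_iff]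
  exact fun j => Measure.ae_smul_measure (by simp [ae_dirac_eq]) _

end PotentialOnAtoms

section DualGap

variable {X : Type*} [MetricSpace X] {n : ℕ} (y : Fin n → X) (ψ : Fin n → ℝ)

noncomputable def dualGap (p : X × X) : ℝ := dist p.1 p.2 ^ 2 - (psiC y ψ p.1 + psiExt y ψ p.2)

lemma dualGap_nonneg (hy : Function.Injective y) (x : X) (i : Fin n) :
    0 ≤ dualGap y ψ (x, y i) := by
  rw [dualGap, psiExt_apply y ψ hy]
  linarith [psiC_le y ψ x i]

lemma dualGap_eq_zero_iff (hy : Function.Injective y) {x : X} {i : Fin n} :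
    dualGap y ψ (x, y i) = 0 ↔ x ∈ Lag y ψ i := by
  rw [mem_lag_iff, dualGap, psiExt_apply y ψ hy]
  constructor <;> intro h <;> linarith [psiC_le y ψ x i]

variable [MeasurableSpace X] [BorelSpace X] {α : Fin n → ℝ} {μ ν : Measure X}
  {π : Measure (X × X)}

lemma dualGap_nonneg_ae (hy : Function.Injective y)
    (hμ : μ = ∑ j, ENNReal.ofReal (α j) • Measure.dirac (y j)) (hc : IsCoupling π ν μ) :
    0 ≤ᵐ[π] dualGap y ψ := by
  filter_upwards [ae_snd_mem_range_of_isCoupling y hμ hc] with ⟨x, z⟩ ⟨i, hi⟩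
  subst hi
  exact dualGap_nonneg y ψ hy x i

end DualGap

section StrongDuality

variable {X : Type*} [MetricSpace X] [CompactSpace X] [MeasurableSpace X] [BorelSpace X]
  {n : ℕ} [NeZero n] (y : Fin n → X) (ψ : Fin n → ℝ) {α : Fin n → ℝ} {ν μ : Measure X}
  [IsFiniteMeasure ν] {π : Measure (X × X)}

lemma integrable_dist_sq (π : Measure (X × X)) [IsFiniteMeasure π] :
    Integrable (fun p : X × X => dist p.1 p.2 ^ 2) π :=
  (by fun_prop : Continuous _).integrable_of_hasCompactSupport
    (HasCompactSupport.of_compactSpace _)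

lemma integrable_psiC_fst (π : Measure (X × X)) [IsFiniteMeasure π] :
    Integrable (fun p => psiC y ψ p.1) π :=
  (integrable_psiC y ψ (π.map Prod.fst)).comp_measurable measurable_fst

lemma integrable_dualGap (π : Measure (X × X)) [IsFiniteMeasure π] :
    Integrable (dualGap y ψ) π :=
  (integrable_dist_sq π).sub ((integrable_psiC_fst y ψ π).add (integrable_psiExt_snd y ψ π))

lemma integral_dualGap (hy : Function.Injective y) (hα : ∀ j, 0 ≤ α j)
    (hμ : μ = ∑ j, ENNReal.ofReal (α j) • Measure.dirac (y j)) (hc : IsCoupling π ν μ) :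
    ∫ p, dualGap y ψ p ∂π = ∫ p, dist p.1 p.2 ^ 2 ∂π - dualFun y α ν ψ := by
  have := hc.isFiniteMeasure
  have h₁ := integrable_psiC_fst y ψ π
  have h₂ := integrable_psiExt_snd y ψ π
  have e₁ : ∫ p, psiC y ψ p.1 ∂π = ∫ x, psiC y ψ x ∂ν := by
    rw [← hc.1, integral_map measurable_fst.aemeasurable
      (continuous_psiC y ψ).aestronglyMeasurable]
  have e₂ : ∫ p, psiExt y ψ p.2 ∂π = ∑ j, α j * ψ j := by
    rw [← integral_psiExt y ψ hy hα hμ, ← hc.2,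
      integral_map measurable_snd.aemeasurable (integrable_psiExt y ψ _).1]
  have h₁₂ : Integrable (fun p : X × X => psiC y ψ p.1 + psiExt y ψ p.2) π := h₁.add h₂
  unfold dualGap
  rw [integral_sub (integrable_dist_sq π) h₁₂, integral_add h₁ h₂, e₁, e₂, dualFun]

lemma dualFun_le_integral_dist_sq (hy : Function.Injective y) (hα : ∀ j, 0 ≤ α j)
    (hμ : μ = ∑ j, ENNReal.ofReal (α j) • Measure.dirac (y j)) (hc : IsCoupling π ν μ) :
    dualFun y α ν ψ ≤ ∫ p, dist p.1 p.2 ^ 2 ∂π := by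
  have := integral_nonneg_of_ae (dualGap_nonneg_ae y ψ hy hμ hc)
  rw [integral_dualGap y ψ hy hα hμ hc] at this
  linarith

/-- Complementary slackness. -/
lemma integral_dist_sq_eq_dualFun_iff (hy : Function.Injective y) (hα : ∀ j, 0 ≤ α j)
    (hμ : μ = ∑ j, ENNReal.ofReal (α j) • Measure.dirac (y j)) (hc : IsCoupling π ν μ) :
    ∫ p, dist p.1 p.2 ^ 2 ∂π = dualFun y α ν ψ ↔
      ∀ᵐ p ∂π, ∃ j, p.1 ∈ Lag y ψ j ∧ p.2 = y j := by
  have := hc.isFiniteMeasure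
  rw [← sub_eq_zero, ← integral_dualGap y ψ hy hα hμ hc, integral_eq_zero_iff_of_nonneg_ae
    (dualGap_nonneg_ae y ψ hy hμ hc) (integrable_dualGap y ψ π)]
  refine eventually_congr ((ae_snd_mem_range_of_isCoupling y hμ hc).mono ?_)
  rintro ⟨x, z⟩ ⟨i, hi⟩
  subst hi
  simp only [Pi.zero_apply, dualGap_eq_zero_iff y ψ hy]
  exact ⟨fun h => ⟨i, h, rfl⟩, fun ⟨j, hj, hji⟩ => hy hji ▸ hj⟩

end StrongDuality

section CellDecomposition

variable {X : Type*} [MetricSpace X] {n : ℕ} (y : Fin n → X) (ψ : Fin n → ℝ)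

lemma dist_sq_eq_sum_indicator_add_indicator {x : X} {i : Fin n} (hx : x ∈ Lag y ψ i) :
    dist x (y i) ^ 2 =
      ∑ j, ((Lag y ψ j \ TieSet y ψ j) ×ˢ Set.univ).indicator
          (fun p : X × X => dist p.1 (y j) ^ 2) (x, y i) +
        ((⋃ j, TieSet y ψ j) ×ˢ Set.range y).indicator (fun p => dist p.1 p.2 ^ 2) (x, y i) := by
  by_cases hT : x ∈ ⋃ j, TieSet y ψ j
  · rw [Finset.sum_eq_zero fun j _ => Set.indicator_of_notMem
      (fun h => notMem_iUnion_tieSet y ψ h.1 hT) _,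
      Set.indicator_of_mem (Set.mem_prod.2 ⟨hT, Set.mem_range_self i⟩), zero_add]
  · have hxi : x ∈ Lag y ψ i \ TieSet y ψ i := ⟨hx, fun h => hT (Set.mem_iUnion.2 ⟨i, h⟩)⟩
    rw [Finset.sum_eq_single i (fun j _ hji => Set.indicator_of_notMem
      (fun h => hji (eq_of_mem_lag_diff_tieSet y ψ h.1 hx).symm) _) (by simp),
      Set.indicator_of_mem (Set.mem_prod.2 ⟨hxi, Set.mem_univ _⟩),
      Set.indicator_of_notMem (fun h => hT h.1), add_zero]

variable [CompactSpace X] [MeasurableSpace X] [BorelSpace X]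

theorem integral_dist_sq_eq_of_ae_mem_lag {π : Measure (X × X)} [IsFiniteMeasure π]
    {ν : Measure X} (hν : π.map Prod.fst = ν) (hπ : ∀ᵐ p ∂π, ∃ j, p.1 ∈ Lag y ψ j ∧ p.2 = y j) :
    ∫ p, dist p.1 p.2 ^ 2 ∂π =
      (∑ j, ∫ x in Lag y ψ j \ TieSet y ψ j, dist x (y j) ^ 2 ∂ν) +
        ∫ p in (⋃ j, TieSet y ψ j) ×ˢ Set.range y, dist p.1 p.2 ^ 2 ∂π := by
  have hA : ∀ j, MeasurableSet (Lag y ψ j \ TieSet y ψ j) := fun j =>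
    (measurableSet_lag y ψ j).diff (measurableSet_tieSet y ψ j)
  have hR : MeasurableSet ((⋃ j, TieSet y ψ j) ×ˢ Set.range y) :=
    (MeasurableSet.iUnion (measurableSet_tieSet y ψ)).prod (Set.finite_range y).measurableSet
  have hint : ∀ j, Integrable (fun p : X × X => dist p.1 (y j) ^ 2) π := fun j =>
    (by fun_prop : Continuous _).integrable_of_hasCompactSupport
      (HasCompactSupport.of_compactSpace _)
  have hcell : ∀ j, ∫ p in (Lag y ψ j \ TieSet y ψ j) ×ˢ Set.univ, dist p.1 (y j) ^ 2 ∂π =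
      ∫ x in Lag y ψ j \ TieSet y ψ j, dist x (y j) ^ 2 ∂ν := fun j => by
    rw [Set.prod_univ, ← hν, setIntegral_map (hA j)
      (by fun_prop : Continuous _).aestronglyMeasurable measurable_fst.aemeasurable]
  have hsplit : (fun p : X × X => dist p.1 p.2 ^ 2) =ᵐ[π] fun p =>
      ∑ j, ((Lag y ψ j \ TieSet y ψ j) ×ˢ Set.univ).indicator
          (fun p : X × X => dist p.1 (y j) ^ 2) p +
        ((⋃ j, TieSet y ψ j) ×ˢ Set.range y).indicator (fun p => dist p.1 p.2 ^ 2) p := by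
    filter_upwards [hπ] with ⟨x, z⟩ ⟨i, hi, hz⟩
    subst hz
    exact dist_sq_eq_sum_indicator_add_indicator y ψ hi
  have hcells : ∀ j, Integrable (((Lag y ψ j \ TieSet y ψ j) ×ˢ Set.univ).indicator
      fun p : X × X => dist p.1 (y j) ^ 2) π := fun j =>
    (hint j).indicator ((hA j).prod MeasurableSet.univ)
  rw [integral_congr_ae hsplit, integral_add (integrable_finsetSum _ fun j _ => hcells j)
    ((integrable_dist_sq π).indicator hR), integral_finsetSum _ fun j _ => hcells j]
  simp_rw [integral_indicator ((hA _).prod MeasurableSet.univ), integral_indicator hR, hcell]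

end CellDecomposition

theorem stmt6_general {X : Type*} [MetricSpace X] [CompactSpace X]
    [MeasurableSpace X] [BorelSpace X]
    (n : ℕ) (hn : 0 < n) (y : Fin n → X) (hy : Function.Injective y)
    (α : Fin n → ℝ) (hα : ∀ j, 0 < α j)
    (ν : Measure X) [IsProbabilityMeasure ν]
    (μ : Measure X) (hμ : μ = ∑ j, ENNReal.ofReal (α j) • Measure.dirac (y j))
    (ψ : Fin n → ℝ) (hmax : ∀ φ : Fin n → ℝ, dualFun y α ν φ ≤ dualFun y α ν ψ)
    (π : Measure (X × X)) (hopt : IsOptimalCoupling π ν μ) :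
    W2sq ν μ =
      (∑ j, ∫ x in Lag y ψ j \ TieSet y ψ j, dist x (y j) ^ 2 ∂ν) +
        ∫ p in (⋃ j, TieSet y ψ j) ×ˢ Set.range y, dist p.1 p.2 ^ 2 ∂π := by
  have : NeZero n := ⟨hn.ne'⟩
  have hα₀ : ∀ j, 0 ≤ α j := fun j => (hα j).le
  have := hopt.1.isFiniteMeasure
  obtain ⟨π₀, hc₀, hπ₀⟩ := exists_isCoupling_ae_mem_lag y ψ hmax hμ
  have hcost : ∫ p, dist p.1 p.2 ^ 2 ∂π = dualFun y α ν ψ :=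
    le_antisymm ((hopt.2 π₀ hc₀).trans
      ((integral_dist_sq_eq_dualFun_iff y ψ hy hα₀ hμ hc₀).2 hπ₀).le)
      (dualFun_le_integral_dist_sq y ψ hy hα₀ hμ hopt.1)
  rw [W2sq_eq_integral_of_isOptimalCoupling hopt]
  exact integral_dist_sq_eq_of_ae_mem_lag y ψ hopt.1.1
    ((integral_dist_sq_eq_dualFun_iff y ψ hy hα₀ hμ hopt.1).1 hcost)

/-- Structure of the squared Wasserstein distance to an atomic measure: it splits
into the costs over the interiors of the Laguerre cells plus the cost over the
tie set. -/
theorem stmt6 {X : Type*} [MetricSpace X] [CompactSpace X]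
    [MeasurableSpace X] [BorelSpace X]
    (n : ℕ) (hn : 0 < n) (y : Fin n → X) (hy : Function.Injective y)
    (α : Fin n → ℝ) (hα : ∀ j, 0 < α j) (hsum : ∑ j, α j = 1)
    (ν : Measure X) [IsProbabilityMeasure ν]
    (μ : Measure X) (hμ : μ = ∑ j, ENNReal.ofReal (α j) • Measure.dirac (y j))
    (ψ : Fin n → ℝ) (hmax : ∀ φ : Fin n → ℝ, dualFun y α ν φ ≤ dualFun y α ν ψ)
    (π : Measure (X × X)) (hopt : IsOptimalCoupling π ν μ) :
    W2sq ν μ =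
      (∑ j, ∫ x in Lag y ψ j \ TieSet y ψ j, dist x (y j) ^ 2 ∂ν) +
        ∫ p in (⋃ j, TieSet y ψ j) ×ˢ Set.range y, dist p.1 p.2 ^ 2 ∂π :=
  stmt6_general n hn y hy α hα ν μ hμ ψ hmax π hopt
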